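/- arXiv:2012.12672 — 2 statements merged into one kernel-verified Lean document; each statement's English description precedes it below -/
import Mathlib

section
/- Let u ≥ 2 be real, Q ≥ 2 an integer, χ a Dirichlet character modulo Q, and χ₁ the primitive character modulo q₁ inducing χ. Then |ψ'(u, χ) − ψ'(u, χ₁)| ≤ (log(Q·u))². -/
/-- `χ` restricted to integers coprime to `q` is `d`-periodic. -/
def RestrictedPeriod {q : ℕ} (χ : DirichletCharacter ℂ q) (d : ℕ) : Prop :=
  ∀ m n : ℤ, IsCoprime m (q : ℤ) → IsCoprime n (q : ℤ) →
    m ≡ n [ZMOD (d : ℤ)] → χ ((m : ZMod q)) = χ ((n : ZMod q))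

/-- `χ` is primitive: its conductor (least positive restricted period) equals `q`. -/
def IsPrimitiveChar {q : ℕ} (χ : DirichletCharacter ℂ q) : Prop :=
  ∀ d : ℕ, 0 < d → RestrictedPeriod χ d → q ≤ d

open Classical in
/-- `ψ'(u, χ) = ∑_{n ≤ u} Λ(n) χ(n) − E(χ) u`, where `E(χ) = 1` iff `χ` is principal. -/
noncomputable def psiPrime {q : ℕ} (χ : DirichletCharacter ℂ q) (u : ℝ) : ℂ :=
  (∑ n ∈ Finset.Icc 1 ⌊u⌋₊,
      (ArithmeticFunction.vonMangoldt n : ℂ) * χ ((n : ZMod q)))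
    - (if χ = 1 then (u : ℂ) else 0)

open Finset ArithmeticFunction

lemma sum_image_le_aux {α β : Type*} [DecidableEq β] (s : Finset α) (f : α → β) (g : β → ℝ)
    (hg : ∀ b, 0 ≤ g b) : ∑ b ∈ s.image f, g b ≤ ∑ a ∈ s, g (f a) := by
  classical
  induction s using Finset.induction_on with
  | empty => simp
  | @insert a s ha ih =>
    rw [Finset.image_insert, Finset.sum_insert ha]
    by_cases hf : f a ∈ s.image f
    · rw [Finset.insert_eq_self.mpr hf]
      have := hg (f a); linarith
    · rw [Finset.sum_insert hf]; linarith

lemma unit_of_cop {q : ℕ} (m : ℤ) (h : IsCoprime m (q : ℤ)) : IsUnit ((m : ZMod q)) := by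
  obtain ⟨a, b, hab⟩ := h
  have := congrArg (Int.cast : ℤ → ZMod q) hab
  push_cast at this
  simp [ZMod.natCast_self] at this
  exact IsUnit.of_mul_eq_one _ (mul_comm (a : ZMod q) (m : ZMod q) ▸ this)

theorem psiPrime_sub_psiPrime_induced (u : ℝ) (hu : 2 ≤ u) (Q : ℕ) (hQ : 2 ≤ Q)
    (χ : DirichletCharacter ℂ Q) (q₁ : ℕ) (hq₁ : 0 < q₁)
    (χ₁ : DirichletCharacter ℂ q₁)
    (hq₁per : RestrictedPeriod χ q₁)
    (hq₁least : ∀ d : ℕ, 0 < d → RestrictedPeriod χ d → q₁ ≤ d)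
    (hprim : IsPrimitiveChar χ₁)
    (hinduce : ∀ n : ℤ, IsCoprime n (Q : ℤ) → χ ((n : ZMod Q)) = χ₁ ((n : ZMod q₁))) :
    ‖psiPrime χ u - psiPrime χ₁ u‖ ≤ (Real.log ((Q : ℝ) * u)) ^ 2 := by
  classical
  have hQ0 : Q ≠ 0 := by omega
  haveI : NeZero Q := ⟨hQ0⟩
  have hu0 : (0:ℝ) < u := by linarith
  -- χ = 1 ↔ χ₁ = 1
  have hiff : χ = 1 ↔ χ₁ = 1 := by
    constructor
    · intro h1
      have hper : RestrictedPeriod χ 1 := by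
        intro m n hm hn _
        rw [h1, MulChar.one_apply (unit_of_cop m hm), MulChar.one_apply (unit_of_cop n hn)]
      exact χ₁.level_one' (le_antisymm (hq₁least 1 one_pos hper) hq₁)
    · intro h1
      have hper : RestrictedPeriod χ₁ 1 := by
        intro m n hm hn _
        rw [h1, MulChar.one_apply (unit_of_cop m hm), MulChar.one_apply (unit_of_cop n hn)]
      have hq1 : q₁ = 1 := le_antisymm (hprim 1 one_pos hper) hq₁
      subst hq1
      refine MulChar.ext fun a => ?_
      have cop : Nat.Coprime ((a : ZMod Q)).val Q := ZMod.val_coe_unit_coprime a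
      have hc : IsCoprime (((a : ZMod Q).val : ℤ)) (Q : ℤ) := Nat.isCoprime_iff_coprime.mpr cop
      have h2 := hinduce _ hc
      rw [show ((((a:ZMod Q).val : ℤ) : ZMod Q)) = (a : ZMod Q) by
        push_cast; exact ZMod.natCast_rightInverse _] at h2
      rw [h2, h1, MulChar.one_apply_coe,
        MulChar.one_apply (isUnit_of_subsingleton _)]
  -- the difference as a single sum
  have hdiff : psiPrime χ u - psiPrime χ₁ u =
      ∑ n ∈ Finset.Icc 1 ⌊u⌋₊,
        ((Λ n : ℂ) * χ ((n : ZMod Q)) - (Λ n : ℂ) * χ₁ ((n : ZMod q₁))) := by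
    simp only [psiPrime]
    rw [Finset.sum_sub_distrib]
    by_cases h : χ₁ = 1
    · rw [if_pos h, if_pos (hiff.mpr h)]; ring
    · rw [if_neg h, if_neg (fun hh => h (hiff.mp hh))]; ring
  rw [hdiff]
  have hM2 : 2 ≤ ⌊u⌋₊ := Nat.le_floor (by exact_mod_cast hu)
  have hMne : ⌊u⌋₊ ≠ 0 := by omega
  set K := Nat.log 2 ⌊u⌋₊ with hK
  set T : Finset ℕ := (Finset.Icc 1 ⌊u⌋₊).filter (fun n => ¬ Nat.Coprime n Q ∧ Λ n ≠ 0) with hT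
  set E : Finset ℕ := (Q.primeFactors ×ˢ Finset.Icc 1 K).image (fun pk => pk.1 ^ pk.2) with hE
  have key1 : ∀ n : ℕ, Nat.Coprime n Q → χ ((n : ZMod Q)) = χ₁ ((n : ZMod q₁)) := by
    intro n hcop
    have := hinduce (n : ℤ) (Nat.isCoprime_iff_coprime.mpr hcop)
    push_cast at this
    exact this
  have key2 : ∀ n : ℕ, ¬ Nat.Coprime n Q → χ ((n : ZMod Q)) = 0 := by
    intro n hncop
    exact χ.map_nonunit (fun hh => hncop ((ZMod.isUnit_iff_coprime n Q).mp hh))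
  have hTsub : T ⊆ E := by
    intro n hn
    rw [hT, Finset.mem_filter] at hn
    obtain ⟨hn1, hn2, hn3⟩ := hn
    obtain ⟨p, k, hp, hk, rfl⟩ := ArithmeticFunction.vonMangoldt_ne_zero_iff.mp hn3
    have hpp : p.Prime := hp.nat_prime
    have hpQ : p ∣ Q := by
      by_contra hnd
      exact hn2 ((Nat.Coprime.pow_left k (hpp.coprime_iff_not_dvd.mpr hnd)))
    have hle : p ^ k ≤ ⌊u⌋₊ := (Finset.mem_Icc.mp hn1).2
    have h2k : 2 ^ k ≤ ⌊u⌋₊ :=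
      le_trans (Nat.pow_le_pow_left hpp.two_le k) hle
    have hkK : k ≤ K := (Nat.le_log_iff_pow_le one_lt_two hMne).mpr h2k
    rw [hE]
    exact Finset.mem_image.mpr ⟨(p, k), Finset.mem_product.mpr
      ⟨Nat.mem_primeFactors.mpr ⟨hpp, hpQ, hQ0⟩, Finset.mem_Icc.mpr ⟨hk, hkK⟩⟩, rfl⟩
  -- chain of bounds
  have step1 : ‖∑ n ∈ Finset.Icc 1 ⌊u⌋₊,
        ((Λ n : ℂ) * χ ((n : ZMod Q)) - (Λ n : ℂ) * χ₁ ((n : ZMod q₁)))‖ ≤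
      ∑ n ∈ T, Λ n := by
    calc ‖∑ n ∈ Finset.Icc 1 ⌊u⌋₊, _‖ ≤
        ∑ n ∈ Finset.Icc 1 ⌊u⌋₊,
          ‖(Λ n : ℂ) * χ ((n : ZMod Q)) - (Λ n : ℂ) * χ₁ ((n : ZMod q₁))‖ := by
          exact
            norm_sum_le (Finset.Icc 1 ⌊u⌋₊)
              (fun n => (Λ n : ℂ) * χ ((n : ZMod Q)) - (Λ n : ℂ) * χ₁ ((n : ZMod q₁)))
      _ = ∑ n ∈ T, ‖(Λ n : ℂ) * χ ((n : ZMod Q)) - (Λ n : ℂ) * χ₁ ((n : ZMod q₁))‖ := by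
          refine (Finset.sum_subset (Finset.filter_subset _ _) ?_).symm
          intro n hn hnT
          rw [Finset.mem_filter] at hnT
          push_neg at hnT
          by_cases hcop : Nat.Coprime n Q
          · rw [key1 n hcop]; simp
          · rw [hnT hn hcop]; simp
      _ ≤ ∑ n ∈ T, Λ n := by
          refine Finset.sum_le_sum fun n hn => ?_
          rw [Finset.mem_filter] at hn
          rw [key2 n hn.2.1, mul_zero, zero_sub, norm_neg, norm_mul, Complex.norm_real, Real.norm_eq_abs,
            abs_of_nonneg ArithmeticFunction.vonMangoldt_nonneg]
          calc Λ n * ‖χ₁ ((n : ZMod q₁))‖ ≤ Λ n * 1 := by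
                refine mul_le_mul_of_nonneg_left ?_ ArithmeticFunction.vonMangoldt_nonneg
                exact χ₁.norm_le_one ((n : ZMod q₁))
            _ = Λ n := mul_one _
  have step2 : ∑ n ∈ T, Λ n ≤ ∑ n ∈ E, Λ n :=
    Finset.sum_le_sum_of_subset_of_nonneg hTsub
      (fun _ _ _ => ArithmeticFunction.vonMangoldt_nonneg)
  have step3 : ∑ n ∈ E, Λ n ≤ (K : ℝ) * ∑ p ∈ Q.primeFactors, Real.log p := by
    calc ∑ n ∈ E, Λ n ≤ ∑ pk ∈ Q.primeFactors ×ˢ Finset.Icc 1 K, Λ (pk.1 ^ pk.2) :=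
        sum_image_le_aux _ _ _ (fun _ => ArithmeticFunction.vonMangoldt_nonneg)
      _ = ∑ p ∈ Q.primeFactors, ∑ k ∈ Finset.Icc 1 K, Λ (p ^ k) := Finset.sum_product _ _ _
      _ = ∑ p ∈ Q.primeFactors, (K : ℝ) * Real.log p := by
          refine Finset.sum_congr rfl fun p hp => ?_
          have hpp : p.Prime := Nat.prime_of_mem_primeFactors hp
          rw [Finset.sum_congr rfl (fun k hk => ?_), Finset.sum_const, Nat.card_Icc,
            Nat.add_sub_cancel, nsmul_eq_mul]
          rw [ArithmeticFunction.vonMangoldt_apply_pow (by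
              have := (Finset.mem_Icc.mp hk).1; omega),
            ArithmeticFunction.vonMangoldt_apply_prime hpp]
      _ = (K : ℝ) * ∑ p ∈ Q.primeFactors, Real.log p := by rw [Finset.mul_sum]
  have hKle : (K : ℝ) ≤ Real.log u / Real.log 2 := by
    have h1 : ((2 ^ K : ℕ) : ℝ) ≤ (⌊u⌋₊ : ℝ) := by exact_mod_cast Nat.pow_log_le_self 2 hMne
    have h2 : (⌊u⌋₊ : ℝ) ≤ u := Nat.floor_le hu0.le
    have h2K : (2:ℝ) ^ K ≤ u := by push_cast at h1; linarith
    have hlog := Real.log_le_log (by positivity) h2K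
    rw [Real.log_pow] at hlog
    rw [le_div_iff₀ (Real.log_pos (by norm_num))]
    exact_mod_cast hlog
  have hsum_nonneg : 0 ≤ ∑ p ∈ Q.primeFactors, Real.log p :=
    Finset.sum_nonneg fun p hp => Real.log_nonneg
      (by exact_mod_cast (Nat.prime_of_mem_primeFactors hp).one_lt.le)
  have hsum_le : ∑ p ∈ Q.primeFactors, Real.log p ≤ Real.log Q := by
    rw [← Real.log_prod (fun p hp => by
      exact_mod_cast (Nat.prime_of_mem_primeFactors hp).pos.ne'), ← Nat.cast_prod]
    exact Real.log_le_log (by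
        exact_mod_cast Finset.prod_pos fun p hp => (Nat.prime_of_mem_primeFactors hp).pos)
      (Nat.cast_le.mpr (Nat.le_of_dvd (by omega) (Nat.prod_primeFactors_dvd Q)))
  have step4 : (K : ℝ) * ∑ p ∈ Q.primeFactors, Real.log p ≤
      (Real.log u / Real.log 2) * Real.log Q :=
    mul_le_mul hKle hsum_le hsum_nonneg
      (div_nonneg (Real.log_nonneg (by linarith)) (Real.log_nonneg (by norm_num)))
  have hfinal : (Real.log u / Real.log 2) * Real.log Q ≤ (Real.log ((Q : ℝ) * u)) ^ 2 := by
    have hQ1 : (0:ℝ) < Q := by exact_mod_cast Nat.pos_of_ne_zero hQ0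
    rw [Real.log_mul (by positivity) (by positivity)]
    have ha : Real.log 2 ≤ Real.log Q := Real.log_le_log (by norm_num) (by exact_mod_cast hQ)
    have hb : Real.log 2 ≤ Real.log u := Real.log_le_log (by norm_num) hu
    have hl2 : (0.6931471803:ℝ) < Real.log 2 := Real.log_two_gt_d9
    rw [div_mul_eq_mul_div, div_le_iff₀ (by linarith)]
    nlinarith [sq_nonneg (Real.log Q - Real.log u), sq_nonneg (Real.log Q + Real.log u),
      mul_pos (show (0:ℝ) < Real.log Q by linarith) (show (0:ℝ) < Real.log u by linarith)]
  calc ‖∑ n ∈ Finset.Icc 1 ⌊u⌋₊,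
        ((Λ n : ℂ) * χ ((n : ZMod Q)) - (Λ n : ℂ) * χ₁ ((n : ZMod q₁)))‖ ≤
      ∑ n ∈ T, Λ n := step1
    _ ≤ ∑ n ∈ E, Λ n := step2
    _ ≤ (K : ℝ) * ∑ p ∈ Q.primeFactors, Real.log p := step3
    _ ≤ (Real.log u / Real.log 2) * Real.log Q := step4
    _ ≤ (Real.log ((Q : ℝ) * u)) ^ 2 := hfinal
end

section
/- Let x ≥ 2 be a real number. Then there exist positive absolute constants b₁, b₂ such that b₁·ln x ≤ ∏_{p ≤ x} (1 − 1/p)^{−1} ≤ b₂·ln x, where the product is over primes p ≤ x. -/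
open Finset



lemma geom_tail_le {r : ℝ} (h0 : 0 ≤ r) (h1 : r < 1) (n : ℕ) :
    ∑ i ∈ range n, r ^ i ≤ (1 - r)⁻¹ := by
  have hs : Summable (fun i : ℕ => r ^ i) := summable_geometric_of_lt_one h0 h1
  calc ∑ i ∈ range n, r ^ i ≤ ∑' i : ℕ, r ^ i :=
        hs.sum_le_tsum _ (fun i _ => pow_nonneg h0 i)
    _ = (1 - r)⁻¹ := tsum_geometric_of_lt_one h0 h1

lemma euler_lower (s : Finset ℕ) (hs : ∀ p ∈ s, p.Prime) (T : Finset ℕ)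
    (hT : ∀ n ∈ T, n ≠ 0 ∧ n.primeFactors ⊆ s) :
    ∑ n ∈ T, (1 : ℝ) / n ≤ ∏ p ∈ s, (1 - 1 / (p : ℝ))⁻¹ := by
  classical
  induction s using Finset.induction_on generalizing T with
  | empty =>
    have hT1 : T ⊆ {1} := by
      intro n hn
      obtain ⟨h0, h1⟩ := hT n hn
      rcases Nat.primeFactors_eq_empty.mp (Finset.subset_empty.mp h1) with h | h
      · exact absurd h h0
      · simp [h]
    calc ∑ n ∈ T, (1 : ℝ) / n ≤ ∑ n ∈ ({1} : Finset ℕ), (1 : ℝ) / n := by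
          apply Finset.sum_le_sum_of_subset_of_nonneg hT1
          intro i _ _; positivity
      _ = 1 := by simp
      _ = _ := by simp
  | @insert p s' hps ih =>
    have hp : p.Prime := hs p (mem_insert_self p s')
    have hs' : ∀ q ∈ s', q.Prime := fun q hq => hs q (mem_insert_of_mem hq)
    have hp0 : (0 : ℝ) ≤ 1 / p := by positivity
    have hp1 : (1 : ℝ) / p < 1 := by
      rw [div_lt_one (by exact_mod_cast hp.pos)]
      exact_mod_cast hp.one_lt
    set K : ℕ := T.sup (fun n => n.factorization p) with hK
    set T' : Finset ℕ := T.image (fun n => n / p ^ n.factorization p) with hT'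
    set g : ℕ → ℕ × ℕ := fun n => (n.factorization p, n / p ^ n.factorization p) with hg
    have hrecon : ∀ n ∈ T, p ^ (g n).1 * (g n).2 = n := fun n hn =>
      Nat.ordProj_mul_ordCompl_eq_self n p
    have hginj : ∀ m ∈ T, ∀ n ∈ T, g m = g n → m = n := by
      intro m hm n hn h
      rw [← hrecon m hm, ← hrecon n hn, h]
    have hval : ∀ n ∈ T, (1 : ℝ) / n = (1 / p) ^ (g n).1 * (1 / (g n).2) := by
      intro n hn
      have h : ((n : ℝ)) = (p : ℝ) ^ (g n).1 * ((g n).2 : ℝ) := by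
        exact_mod_cast (congrArg (Nat.cast (R := ℝ)) (hrecon n hn)).symm
      rw [h, div_pow, one_pow, div_mul_div_comm, one_mul]
    have hsub : T.image g ⊆ (range (K + 1)) ×ˢ T' := by
      intro y hy
      obtain ⟨n, hn, rfl⟩ := Finset.mem_image.mp hy
      rw [Finset.mem_product]
      constructor
      · exact Finset.mem_range.mpr (Nat.lt_succ_of_le (Finset.le_sup (f := fun n => n.factorization p) hn))
      · exact Finset.mem_image_of_mem _ hn
    calc ∑ n ∈ T, (1 : ℝ) / n
        = ∑ n ∈ T, (1 / (p : ℝ)) ^ (g n).1 * (1 / ((g n).2 : ℝ)) := Finset.sum_congr rfl hval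
      _ = ∑ y ∈ T.image g, (1 / (p : ℝ)) ^ y.1 * (1 / (y.2 : ℝ)) := by
          rw [Finset.sum_image hginj]
      _ ≤ ∑ y ∈ (range (K + 1)) ×ˢ T', (1 / (p : ℝ)) ^ y.1 * (1 / (y.2 : ℝ)) := by
          apply Finset.sum_le_sum_of_subset_of_nonneg hsub
          intro y _ _; positivity
      _ = (∑ k ∈ range (K + 1), (1 / (p : ℝ)) ^ k) * (∑ m ∈ T', (1 : ℝ) / m) := by
          rw [Finset.sum_mul_sum, Finset.sum_product]
      _ ≤ (1 - 1 / (p : ℝ))⁻¹ * ∏ q ∈ s', (1 - 1 / (q : ℝ))⁻¹ := by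
          apply mul_le_mul (geom_tail_le hp0 hp1 _)
          · apply ih hs'
            intro m hm
            obtain ⟨n, hn, rfl⟩ := Finset.mem_image.mp hm
            obtain ⟨hn0, hnf⟩ := hT n hn
            refine ⟨(Nat.ordCompl_pos p hn0).ne', ?_⟩
            intro q hq
            have hq' := Nat.mem_primeFactors.mp hq
            have hqn : q ∈ n.primeFactors :=
              Nat.mem_primeFactors.mpr ⟨hq'.1, hq'.2.1.trans (Nat.ordCompl_dvd n p), hn0⟩
            have := hnf hqn
            rcases Finset.mem_insert.mp this with h | h
            · exact absurd (h ▸ hq'.2.1) (Nat.not_dvd_ordCompl hp hn0)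
            · exact h
          · apply Finset.sum_nonneg; intro m _; positivity
          · rw [inv_nonneg]; linarith
      _ = ∏ q ∈ insert p s', (1 - 1 / (q : ℝ))⁻¹ := by rw [Finset.prod_insert hps]


lemma filter_Icc_eq_range (N : ℕ) :
    (Icc 1 N).filter Nat.Prime = (range (N + 1)).filter Nat.Prime := by
  ext q
  simp only [mem_filter, mem_Icc, mem_range, Nat.lt_succ_iff]
  exact ⟨fun h => ⟨h.1.2, h.2⟩, fun h => ⟨⟨h.2.one_lt.le.trans' (by norm_num), h.1⟩, h.2⟩⟩

lemma theta_le (N : ℕ) :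
    ∑ p ∈ (Icc 1 N).filter Nat.Prime, Real.log p ≤ N * Real.log 4 := by
  rw [filter_Icc_eq_range]
  have h1 : ∑ p ∈ (range (N + 1)).filter Nat.Prime, Real.log p
      = Real.log (primorial N) := by
    rw [primorial, Nat.cast_prod, Real.log_prod]
    · intro p hp
      exact_mod_cast (Nat.Prime.pos (mem_filter.mp hp).2).ne'
  rw [h1]
  calc Real.log (primorial N) ≤ Real.log ((4 : ℝ) ^ N) := by
        apply Real.log_le_log (by exact_mod_cast primorial_pos N)
        exact_mod_cast primorial_le_4_pow N
    _ = N * Real.log 4 := by rw [Real.log_pow]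

lemma div_le_factorization_factorial {N p : ℕ} (hp : p.Prime) (hpN : p ≤ N) :
    N / p ≤ (Nat.factorial N).factorization p := by
  have hN0 : N ≠ 0 := by have := hp.two_le; omega
  rw [← Nat.Prime.pow_dvd_iff_le_factorization hp (Nat.factorial_ne_zero N)]
  rw [Nat.Prime.pow_dvd_factorial_iff hp (Nat.lt_succ_self _)]
  have h1 : 1 ∈ Finset.Ico 1 (Nat.log p N + 1) := by
    simp only [mem_Ico, le_refl, true_and]
    have : 1 ≤ Nat.log p N := by
      rw [Nat.le_log_iff_pow_le hp.one_lt hN0]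
      simpa using hpN
    omega
  calc N / p = N / p ^ 1 := by norm_num
    _ ≤ ∑ i ∈ Finset.Ico 1 (Nat.log p N + 1), N / p ^ i :=
        Finset.single_le_sum (f := fun i => N / p ^ i) (fun i _ => Nat.zero_le _) h1

lemma sum_div_log_le_log_factorial {N : ℕ} (hN : 1 ≤ N) :
    ∑ p ∈ (Icc 1 N).filter Nat.Prime, ((N / p : ℕ) : ℝ) * Real.log p
      ≤ Real.log (Nat.factorial N) := by
  have hfac0 : (Nat.factorial N : ℕ) ≠ 0 := Nat.factorial_ne_zero N
  have hexp : Real.log (Nat.factorial N) =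
      ∑ p ∈ (Nat.factorial N).primeFactors, ((Nat.factorial N).factorization p : ℝ) * Real.log p := by
    conv_lhs => rw [← Nat.factorization_prod_pow_eq_self hfac0]
    rw [Nat.prod_factorization_eq_prod_primeFactors]
    rw [Nat.cast_prod, Real.log_prod]
    · apply Finset.sum_congr rfl
      intro p hp
      rw [Nat.cast_pow, Real.log_pow]
    · intro p hp
      have hpp := Nat.prime_of_mem_primeFactors hp
      exact_mod_cast pow_ne_zero _ hpp.pos.ne' 
  rw [hexp]
  have hsub : (Icc 1 N).filter Nat.Prime ⊆ (Nat.factorial N).primeFactors := by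
    intro p hp
    obtain ⟨hmem, hprime⟩ := mem_filter.mp hp
    exact Nat.mem_primeFactors.mpr
      ⟨hprime, Nat.dvd_factorial hprime.pos (mem_Icc.mp hmem).2, hfac0⟩
  calc ∑ p ∈ (Icc 1 N).filter Nat.Prime, ((N / p : ℕ) : ℝ) * Real.log p
      ≤ ∑ p ∈ (Icc 1 N).filter Nat.Prime, ((Nat.factorial N).factorization p : ℝ) * Real.log p := by
        apply Finset.sum_le_sum
        intro p hp
        obtain ⟨hmem, hprime⟩ := mem_filter.mp hp
        have h := div_le_factorization_factorial hprime (mem_Icc.mp hmem).2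
        have hlog : 0 ≤ Real.log p := Real.log_nonneg (by exact_mod_cast hprime.one_lt.le)
        exact mul_le_mul_of_nonneg_right (by exact_mod_cast h) hlog
    _ ≤ _ := by
        apply Finset.sum_le_sum_of_subset_of_nonneg hsub
        intro p hp _
        have := Nat.prime_of_mem_primeFactors hp
        have hlog : 0 ≤ Real.log p := Real.log_nonneg (by exact_mod_cast this.one_lt.le)
        positivity

lemma mertens_first {N : ℕ} (hN : 2 ≤ N) :
    ∑ p ∈ (Icc 1 N).filter Nat.Prime, Real.log p / p
      ≤ Real.log N + 2 * Real.log 4 := by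
  have hN0 : (0 : ℝ) < N := by positivity
  rw [← mul_le_mul_iff_right₀ hN0]
  have key : (N : ℝ) * ∑ p ∈ (Icc 1 N).filter Nat.Prime, Real.log p / p
      = ∑ p ∈ (Icc 1 N).filter Nat.Prime, ((N : ℝ) / p) * Real.log p := by
    rw [mul_sum]
    apply Finset.sum_congr rfl
    intro p hp; ring
  rw [key]
  have step1 : ∀ p ∈ (Icc 1 N).filter Nat.Prime,
      ((N : ℝ) / p) * Real.log p ≤ (((N / p : ℕ) : ℝ) + 1) * Real.log p := by
    intro p hp
    obtain ⟨hmem, hprime⟩ := mem_filter.mp hp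
    have hp0 : (0 : ℝ) < p := by exact_mod_cast hprime.pos
    have hlog : 0 ≤ Real.log p := Real.log_nonneg (by exact_mod_cast hprime.one_lt.le)
    apply mul_le_mul_of_nonneg_right _ hlog
    rw [div_le_iff₀ hp0]
    have hdm := Nat.div_add_mod N p
    have hm : N % p < p := Nat.mod_lt N hprime.pos
    have h1 : (N : ℝ) = p * (N / p : ℕ) + (N % p : ℕ) := by exact_mod_cast hdm.symm
    have h2 : ((N % p : ℕ) : ℝ) < p := by exact_mod_cast hm
    rw [h1]; ring_nf; nlinarith [hp0]
  calc ∑ p ∈ (Icc 1 N).filter Nat.Prime, ((N : ℝ) / p) * Real.log p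
      ≤ ∑ p ∈ (Icc 1 N).filter Nat.Prime, (((N / p : ℕ) : ℝ) + 1) * Real.log p :=
        Finset.sum_le_sum step1
    _ = (∑ p ∈ (Icc 1 N).filter Nat.Prime, ((N / p : ℕ) : ℝ) * Real.log p)
        + ∑ p ∈ (Icc 1 N).filter Nat.Prime, Real.log p := by
        rw [← Finset.sum_add_distrib]
        apply Finset.sum_congr rfl
        intro p hp; ring
    _ ≤ Real.log (Nat.factorial N) + N * Real.log 4 :=
        add_le_add (sum_div_log_le_log_factorial (by omega)) (theta_le N)
    _ ≤ N * Real.log N + N * Real.log 4 := by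
        have h1 : Real.log (Nat.factorial N) ≤ N * Real.log N := by
          calc Real.log (Nat.factorial N) ≤ Real.log ((N : ℝ) ^ N) := by
                apply Real.log_le_log (by exact_mod_cast Nat.factorial_pos N)
                exact_mod_cast Nat.factorial_le_pow N
            _ = N * Real.log N := by rw [Real.log_pow]
        linarith
    _ = N * (Real.log N + 2 * Real.log 4) - N * Real.log 4 := by ring
    _ ≤ N * (Real.log N + 2 * Real.log 4) := by
        have : 0 ≤ (N : ℝ) * Real.log 4 := by
          apply mul_nonneg hN0.le (Real.log_nonneg (by norm_num))
        linarith


private noncomputable def Afun (N : ℕ) : ℝ := ∑ p ∈ (Icc 1 N).filter Nat.Prime, Real.log p / p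
private noncomputable def Sfun (N : ℕ) : ℝ := ∑ p ∈ (Icc 1 N).filter Nat.Prime, 1 / (p : ℝ)

private lemma incr (f : ℕ → ℝ) (N : ℕ) :
    ∑ p ∈ (Icc 1 (N + 1)).filter Nat.Prime, f p
      = ∑ p ∈ (Icc 1 N).filter Nat.Prime, f p + (if (N + 1).Prime then f (N + 1) else 0) := by
  have h : Icc 1 (N + 1) = insert (N + 1) (Icc 1 N) := by
    ext m
    simp only [Finset.mem_Icc, Finset.mem_insert]
    omega
  rw [h, Finset.filter_insert]
  split
  · rw [Finset.sum_insert (by simp)]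
    ring
  · ring

private lemma tele (f : ℕ → ℝ) (a : ℕ) : ∀ N, a ≤ N →
    ∑ n ∈ Ico a N, (f n - f (n + 1)) = f a - f N := by
  intro N hN
  induction N, hN using Nat.le_induction with
  | base => simp
  | succ N hN ih =>
    rw [Finset.sum_Ico_succ_top hN, ih]
    ring

private lemma abel_identity : ∀ N, 2 ≤ N →
    Sfun N = Afun N / Real.log N
      + ∑ n ∈ Ico 2 N, Afun n * (1 / Real.log n - 1 / Real.log (n + 1)) := by
  intro N hN
  induction N, hN using Nat.le_induction with
  | base =>
    have h2 : ((Icc 1 2).filter Nat.Prime) = {2} := by decide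
    have hlog2 : Real.log 2 ≠ 0 := (Real.log_pos (by norm_num)).ne'
    simp only [Sfun, Afun, h2, Finset.sum_singleton, Finset.Ico_self, Finset.sum_empty, add_zero]
    push_cast
    field_simp
  | succ N hN ih =>
    have hN1 : (1 : ℝ) < N := by exact_mod_cast hN.trans_lt' (by norm_num)
    have hlogN : Real.log N ≠ 0 := (Real.log_pos hN1).ne'
    have hlogN1 : Real.log ((N : ℝ) + 1) ≠ 0 :=
      (Real.log_pos (by linarith)).ne'
    have hS : Sfun (N + 1) = Sfun N + (if (N + 1).Prime then 1 / ((N : ℝ) + 1) else 0) := by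
      rw [Sfun, incr]
      push_cast
      rfl
    have hA : Afun (N + 1) = Afun N
        + (if (N + 1).Prime then Real.log ((N : ℝ) + 1) / ((N : ℝ) + 1) else 0) := by
      rw [Afun, incr]
      push_cast
      rfl
    rw [Finset.sum_Ico_succ_top hN, hS, hA, ih]
    by_cases hp : (N + 1).Prime
    · simp only [if_pos hp]
      push_cast
      field_simp
      ring
    · simp only [if_neg hp]
      push_cast
      field_simp
      ring


lemma term_bound {a An c1 : ℝ} (ha : 2 ≤ a) (hA : An ≤ Real.log a + c1) :
    An * (1 / Real.log a - 1 / Real.log (a + 1)) ≤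
      (Real.log (Real.log (a + 1)) - Real.log (Real.log a))
        + (1 / a - 1 / (a + 1)) / Real.log 2
        + c1 * (1 / Real.log a - 1 / Real.log (a + 1)) := by
  have ha0 : (0 : ℝ) < a := by linarith
  have hla : 0 < Real.log a := Real.log_pos (by linarith)
  have hla1 : 0 < Real.log (a + 1) := Real.log_pos (by linarith)
  have hmono : Real.log a ≤ Real.log (a + 1) := Real.log_le_log ha0 (by linarith)
  have hlog2 : 0 < Real.log 2 := Real.log_pos (by norm_num)
  have hdif : 0 ≤ 1 / Real.log a - 1 / Real.log (a + 1) := by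
    rw [sub_nonneg]; exact one_div_le_one_div_of_le hla hmono
  have h1 : An * (1 / Real.log a - 1 / Real.log (a + 1))
      ≤ (Real.log a + c1) * (1 / Real.log a - 1 / Real.log (a + 1)) :=
    mul_le_mul_of_nonneg_right hA hdif
  have hub : Real.log (a + 1) - Real.log a ≤ 1 / a := by
    rw [← Real.log_div (by linarith) (by linarith)]
    have h := Real.log_le_sub_one_of_pos (x := (a + 1) / a) (by positivity)
    have heq : (a + 1) / a - 1 = 1 / a := by field_simp; ring
    linarith
  have hlb : 1 / (a + 1) ≤ Real.log (a + 1) - Real.log a := by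
    have h := Real.log_le_sub_one_of_pos (x := a / (a + 1)) (by positivity)
    rw [Real.log_div (by linarith) (by linarith)] at h
    have heq : a / (a + 1) - 1 = -(1 / (a + 1)) := by field_simp; ring
    linarith
  have hL : (1 / (a + 1)) / Real.log (a + 1)
      ≤ Real.log (Real.log (a + 1)) - Real.log (Real.log a) := by
    have h3 := Real.log_le_sub_one_of_pos (x := Real.log a / Real.log (a + 1)) (by positivity)
    rw [Real.log_div hla.ne' hla1.ne'] at h3
    have h4 : (1 / (a + 1)) / Real.log (a + 1)
        ≤ (Real.log (a + 1) - Real.log a) / Real.log (a + 1) :=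
      (div_le_div_iff_of_pos_right hla1).mpr hlb
    have h5 : (Real.log (a + 1) - Real.log a) / Real.log (a + 1)
        = 1 - Real.log a / Real.log (a + 1) := by field_simp
    linarith
  have key : Real.log a * (1 / Real.log a - 1 / Real.log (a + 1))
      ≤ (Real.log (Real.log (a + 1)) - Real.log (Real.log a))
        + (1 / a - 1 / (a + 1)) / Real.log 2 := by
    have e1 : Real.log a * (1 / Real.log a - 1 / Real.log (a + 1))
        = (Real.log (a + 1) - Real.log a) / Real.log (a + 1) := by
      field_simp
    have e2 : (Real.log (a + 1) - Real.log a) / Real.log (a + 1)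
        ≤ (1 / a) / Real.log (a + 1) := (div_le_div_iff_of_pos_right hla1).mpr hub
    have e3 : (1 / a) / Real.log (a + 1) = (1 / (a + 1)) / Real.log (a + 1)
        + (1 / a - 1 / (a + 1)) / Real.log (a + 1) := by ring
    have e4 : (1 / a - 1 / (a + 1)) / Real.log (a + 1)
        ≤ (1 / a - 1 / (a + 1)) / Real.log 2 := by
      apply div_le_div_of_nonneg_left _ hlog2 (Real.log_le_log (by norm_num) (by linarith))
      rw [sub_nonneg]
      exact one_div_le_one_div_of_le ha0 (by linarith)
    linarith
  calc An * (1 / Real.log a - 1 / Real.log (a + 1))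
      ≤ (Real.log a + c1) * (1 / Real.log a - 1 / Real.log (a + 1)) := h1
    _ = Real.log a * (1 / Real.log a - 1 / Real.log (a + 1))
        + c1 * (1 / Real.log a - 1 / Real.log (a + 1)) := by ring
    _ ≤ _ := by linarith

private lemma Sfun_le {N : ℕ} (hN : 2 ≤ N) :
    Sfun N ≤ Real.log (Real.log N)
      + (1 + (4 * Real.log 4 + 1) / Real.log 2 - Real.log (Real.log 2)) := by
  have hlog2 : 0 < Real.log 2 := Real.log_pos (by norm_num)
  have hN1 : (1 : ℝ) < N := by exact_mod_cast hN.trans_lt' (by norm_num)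
  have hlN : 0 < Real.log N := Real.log_pos hN1
  have hmono2N : Real.log 2 ≤ Real.log N :=
    Real.log_le_log (by norm_num) (by exact_mod_cast hN)
  set c1 : ℝ := 2 * Real.log 4 with hc1def
  have hlog4 : 0 ≤ Real.log 4 := Real.log_nonneg (by norm_num)
  have hc1 : 0 ≤ c1 := by rw [hc1def]; positivity
  rw [abel_identity N hN]
  have parta : Afun N / Real.log N ≤ 1 + c1 / Real.log 2 := by
    have h : Afun N ≤ Real.log N + c1 := mertens_first hN
    calc Afun N / Real.log N ≤ (Real.log N + c1) / Real.log N :=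
          (div_le_div_iff_of_pos_right hlN).mpr h
      _ = 1 + c1 / Real.log N := by field_simp
      _ ≤ 1 + c1 / Real.log 2 := by
          have := div_le_div_of_nonneg_left hc1 hlog2 hmono2N
          linarith
  have t1 : ∑ n ∈ Ico 2 N, (Real.log (Real.log ((n : ℝ) + 1)) - Real.log (Real.log (n : ℝ)))
      = Real.log (Real.log N) - Real.log (Real.log 2) := by
    have h := tele (fun k => -Real.log (Real.log (k : ℝ))) 2 N hN
    calc ∑ n ∈ Ico 2 N, (Real.log (Real.log ((n : ℝ) + 1)) - Real.log (Real.log (n : ℝ)))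
        = ∑ n ∈ Ico 2 N, ((fun k : ℕ => -Real.log (Real.log (k : ℝ))) n
            - (fun k : ℕ => -Real.log (Real.log (k : ℝ))) (n + 1)) := by
          apply Finset.sum_congr rfl
          intro n _
          push_cast
          ring
      _ = -Real.log (Real.log ((2 : ℕ) : ℝ)) - -Real.log (Real.log (N : ℝ)) := h
      _ = Real.log (Real.log N) - Real.log (Real.log 2) := by push_cast; ring
  have t2 : ∑ n ∈ Ico 2 N, (1 / (n : ℝ) - 1 / ((n : ℝ) + 1))
      = 1 / 2 - 1 / (N : ℝ) := by
    have h := tele (fun k => 1 / (k : ℝ)) 2 N hN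
    calc ∑ n ∈ Ico 2 N, (1 / (n : ℝ) - 1 / ((n : ℝ) + 1))
        = ∑ n ∈ Ico 2 N, ((fun k : ℕ => 1 / (k : ℝ)) n - (fun k : ℕ => 1 / (k : ℝ)) (n + 1)) := by
          apply Finset.sum_congr rfl
          intro n _
          push_cast
          ring
      _ = 1 / ((2 : ℕ) : ℝ) - 1 / (N : ℝ) := h
      _ = 1 / 2 - 1 / (N : ℝ) := by push_cast; ring
  have t3 : ∑ n ∈ Ico 2 N, (1 / Real.log (n : ℝ) - 1 / Real.log ((n : ℝ) + 1))
      = 1 / Real.log 2 - 1 / Real.log (N : ℝ) := by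
    have h := tele (fun k => 1 / Real.log (k : ℝ)) 2 N hN
    calc ∑ n ∈ Ico 2 N, (1 / Real.log (n : ℝ) - 1 / Real.log ((n : ℝ) + 1))
        = ∑ n ∈ Ico 2 N, ((fun k : ℕ => 1 / Real.log (k : ℝ)) n
            - (fun k : ℕ => 1 / Real.log (k : ℝ)) (n + 1)) := by
          apply Finset.sum_congr rfl
          intro n _
          push_cast
          ring
      _ = 1 / Real.log ((2 : ℕ) : ℝ) - 1 / Real.log (N : ℝ) := h
      _ = 1 / Real.log 2 - 1 / Real.log (N : ℝ) := by push_cast; ring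
  have partb : ∑ n ∈ Ico 2 N, Afun n * (1 / Real.log n - 1 / Real.log ((n : ℝ) + 1))
      ≤ (Real.log (Real.log N) - Real.log (Real.log 2))
        + ((1 : ℝ) / 2 - 1 / (N : ℝ)) / Real.log 2
        + c1 * (1 / Real.log 2 - 1 / Real.log (N : ℝ)) := by
    calc ∑ n ∈ Ico 2 N, Afun n * (1 / Real.log n - 1 / Real.log ((n : ℝ) + 1))
        ≤ ∑ n ∈ Ico 2 N, ((Real.log (Real.log ((n : ℝ) + 1)) - Real.log (Real.log (n : ℝ)))
            + (1 / (n : ℝ) - 1 / ((n : ℝ) + 1)) / Real.log 2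
            + c1 * (1 / Real.log (n : ℝ) - 1 / Real.log ((n : ℝ) + 1))) := by
          apply Finset.sum_le_sum
          intro n hn
          have hn2 : 2 ≤ n := (mem_Ico.mp hn).1
          have ha : (2 : ℝ) ≤ n := by exact_mod_cast hn2
          exact term_bound ha (mertens_first hn2)
      _ = (∑ n ∈ Ico 2 N, (Real.log (Real.log ((n : ℝ) + 1)) - Real.log (Real.log (n : ℝ))))
          + (∑ n ∈ Ico 2 N, (1 / (n : ℝ) - 1 / ((n : ℝ) + 1))) / Real.log 2
          + c1 * ∑ n ∈ Ico 2 N, (1 / Real.log (n : ℝ) - 1 / Real.log ((n : ℝ) + 1)) := by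
          rw [Finset.sum_add_distrib, Finset.sum_add_distrib, Finset.sum_div, Finset.mul_sum]
      _ = _ := by rw [t1, t2, t3]
  have hN0 : (0 : ℝ) < N := by linarith
  have haux1 : 0 ≤ c1 / Real.log N := div_nonneg hc1 hlN.le
  have haux2 : 0 ≤ 1 / (N : ℝ) := by positivity
  have haux3 : ((1 : ℝ) / 2 - 1 / (N : ℝ)) / Real.log 2 ≤ (1 : ℝ) / Real.log 2 := by
    apply (div_le_div_iff_of_pos_right hlog2).mpr
    linarith
  have haux4 : 2 * (c1 / Real.log 2) + 1 / Real.log 2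
      = (4 * Real.log 4 + 1) / Real.log 2 := by
    rw [hc1def]; ring
  have haux5 : c1 * (1 / Real.log 2 - 1 / Real.log (N : ℝ))
      = c1 / Real.log 2 - c1 / Real.log N := by ring
  have haux6 : 0 ≤ c1 / Real.log 2 := div_nonneg hc1 hlog2.le
  linarith [parta, partb]

private lemma prod_le_exp {N : ℕ} (hN : 2 ≤ N) :
    ∏ p ∈ (Icc 1 N).filter Nat.Prime, (1 - 1 / (p : ℝ))⁻¹ ≤ Real.exp (Sfun N + 1) := by
  have h1 : ∏ p ∈ (Icc 1 N).filter Nat.Prime, (1 - 1 / (p : ℝ))⁻¹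
      ≤ ∏ p ∈ (Icc 1 N).filter Nat.Prime,
          Real.exp (1 / (p : ℝ) + 1 / ((p : ℝ) * ((p : ℝ) - 1))) := by
    apply Finset.prod_le_prod
    · intro p hp
      have hp2 : (2 : ℝ) ≤ p := by exact_mod_cast (mem_filter.mp hp).2.two_le
      have h : 1 / (p : ℝ) ≤ 1 / 2 := one_div_le_one_div_of_le (by norm_num) hp2
      exact inv_nonneg.mpr (by linarith)
    · intro p hp
      have hp2 : (2 : ℝ) ≤ p := by exact_mod_cast (mem_filter.mp hp).2.two_le
      have hp0 : (0 : ℝ) < p := by linarith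
      have hp1 : (0 : ℝ) < (p : ℝ) - 1 := by linarith
      have e1 : (1 - 1 / (p : ℝ))⁻¹ = 1 / ((p : ℝ) - 1) + 1 := by
        field_simp
        ring
      have e2 : 1 / ((p : ℝ) - 1) = 1 / (p : ℝ) + 1 / ((p : ℝ) * ((p : ℝ) - 1)) := by
        field_simp
        ring
      rw [e1, ← e2]
      exact Real.add_one_le_exp _
  rw [← Real.exp_sum] at h1
  refine h1.trans (Real.exp_le_exp.mpr ?_)
  rw [Finset.sum_add_distrib]
  have h2 : ∑ p ∈ (Icc 1 N).filter Nat.Prime, 1 / ((p : ℝ) * ((p : ℝ) - 1)) ≤ 1 := by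
    have hsub : (Icc 1 N).filter Nat.Prime ⊆ Icc 2 N := by
      intro p hp
      obtain ⟨hm, hpr⟩ := mem_filter.mp hp
      rw [mem_Icc] at hm ⊢
      exact ⟨hpr.two_le, hm.2⟩
    have hstep : ∑ p ∈ (Icc 1 N).filter Nat.Prime, 1 / ((p : ℝ) * ((p : ℝ) - 1))
        ≤ ∑ n ∈ Icc 2 N, 1 / ((n : ℝ) * ((n : ℝ) - 1)) := by
      apply Finset.sum_le_sum_of_subset_of_nonneg hsub
      intro n hn _
      have hn2 : (2 : ℝ) ≤ n := by exact_mod_cast (mem_Icc.mp hn).1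
      have : (0 : ℝ) < (n : ℝ) - 1 := by linarith
      positivity
    have htel : ∑ n ∈ Icc 2 N, 1 / ((n : ℝ) * ((n : ℝ) - 1)) = 1 - 1 / (N : ℝ) := by
      have h := tele (fun k => 1 / ((k : ℝ) - 1)) 2 (N + 1) (by omega)
      calc ∑ n ∈ Icc 2 N, 1 / ((n : ℝ) * ((n : ℝ) - 1))
          = ∑ n ∈ Ico 2 (N + 1), ((fun k : ℕ => 1 / ((k : ℝ) - 1)) n
              - (fun k : ℕ => 1 / ((k : ℝ) - 1)) (n + 1)) := by
            rw [← Finset.Ico_add_one_right_eq_Icc]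
            apply Finset.sum_congr rfl
            intro n hn
            have hn2 : (2 : ℝ) ≤ n := by exact_mod_cast (mem_Ico.mp hn).1
            have h1 : (0 : ℝ) < (n : ℝ) - 1 := by linarith
            have h0 : (0 : ℝ) < n := by linarith
            push_cast
            rw [add_sub_cancel_right]
            field_simp
            ring
        _ = 1 / (((2 : ℕ) : ℝ) - 1) - 1 / (((N + 1 : ℕ) : ℝ) - 1) := h
        _ = 1 - 1 / (N : ℝ) := by push_cast; norm_num
    have hN0 : (0 : ℝ) < N := by exact_mod_cast hN.trans_lt' (by norm_num)
    have : 0 ≤ 1 / (N : ℝ) := by positivity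
    linarith
  have : Sfun N = ∑ p ∈ (Icc 1 N).filter Nat.Prime, 1 / (p : ℝ) := rfl
  linarith

theorem mertens_product_bounds :
    ∃ b₁ b₂ : ℝ, 0 < b₁ ∧ 0 < b₂ ∧ ∀ x : ℝ, 2 ≤ x →
      b₁ * Real.log x ≤
          ∏ p ∈ Finset.filter Nat.Prime (Finset.Icc 1 ⌊x⌋₊), (1 - 1 / (p : ℝ))⁻¹ ∧
        ∏ p ∈ Finset.filter Nat.Prime (Finset.Icc 1 ⌊x⌋₊), (1 - 1 / (p : ℝ))⁻¹ ≤
          b₂ * Real.log x := by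
  refine ⟨1, Real.exp ((1 + (4 * Real.log 4 + 1) / Real.log 2 - Real.log (Real.log 2)) + 1),
    one_pos, Real.exp_pos _, ?_⟩
  intro x hx
  set N := ⌊x⌋₊ with hNdef
  have hN2 : 2 ≤ N := Nat.le_floor (by exact_mod_cast hx)
  have hx0 : (0 : ℝ) < x := by linarith
  have hNx : (N : ℝ) ≤ x := Nat.floor_le hx0.le
  have hN1 : (1 : ℝ) < N := by exact_mod_cast hN2.trans_lt' (by norm_num)
  have hlN : 0 < Real.log N := Real.log_pos hN1
  constructor
  · rw [one_mul]
    have step1 : Real.log x ≤ ((harmonic N : ℚ) : ℝ) := log_le_harmonic_floor x hx0.le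
    have step2 : ((harmonic N : ℚ) : ℝ) = ∑ n ∈ Icc 1 N, (1 : ℝ) / n := by
      rw [harmonic]
      push_cast
      rw [← Finset.Ico_add_one_right_eq_Icc, Finset.sum_Ico_eq_sum_range]
      apply Finset.sum_congr (by norm_num)
      intro i _
      push_cast
      rw [one_div, add_comm]
    have step3 : ∑ n ∈ Icc 1 N, (1 : ℝ) / n
        ≤ ∏ p ∈ (Icc 1 N).filter Nat.Prime, (1 - 1 / (p : ℝ))⁻¹ := by
      apply euler_lower
      · intro p hp
        exact (mem_filter.mp hp).2
      · intro n hn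
        rw [mem_Icc] at hn
        refine ⟨by omega, ?_⟩
        intro q hq
        obtain ⟨hqp, hqd, hn0⟩ := Nat.mem_primeFactors.mp hq
        rw [mem_filter, mem_Icc]
        exact ⟨⟨hqp.one_lt.le.trans' (by norm_num), (Nat.le_of_dvd (by omega) hqd).trans hn.2⟩, hqp⟩
    calc Real.log x ≤ _ := step1
      _ = _ := step2
      _ ≤ _ := step3
  · calc ∏ p ∈ (Icc 1 N).filter Nat.Prime, (1 - 1 / (p : ℝ))⁻¹
        ≤ Real.exp (Sfun N + 1) := prod_le_exp hN2
      _ ≤ Real.exp ((Real.log (Real.log N)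
          + (1 + (4 * Real.log 4 + 1) / Real.log 2 - Real.log (Real.log 2))) + 1) := by
          apply Real.exp_le_exp.mpr
          have := Sfun_le hN2
          linarith
      _ = Real.exp ((1 + (4 * Real.log 4 + 1) / Real.log 2 - Real.log (Real.log 2)) + 1)
          * Real.log N := by
          rw [show (Real.log (Real.log N)
              + (1 + (4 * Real.log 4 + 1) / Real.log 2 - Real.log (Real.log 2))) + 1
              = ((1 + (4 * Real.log 4 + 1) / Real.log 2 - Real.log (Real.log 2)) + 1)
                + Real.log (Real.log N) by ring]
          rw [Real.exp_add, Real.exp_log hlN]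
      _ ≤ _ := by
          apply mul_le_mul_of_nonneg_left _ (Real.exp_pos _).le
          exact Real.log_le_log (by linarith) hNx
end
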